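/- arXiv:1101.5810 — 2 statements merged into one kernel-verified Lean document; each statement's English description precedes it below -/
import Mathlib

section
/- The shuffle product x * y = B(r,s)(x ⊗ y) for x ∈ X^{⊗r}, y ∈ X^{⊗s} (where B(r,s) is the braided binomial) is associative: for all r,s,t, B(r+s, t) ∘ (B(r,s) ⊗ id^{⊗t}) = B(r, s+t) ∘ (id^{⊗r} ⊗ B(s,t)). -/
/- We work in the braid group algebra, modelled as an associative ring `A` equipped with a
family `ψ i` of elements satisfying the braid relations.  The braided binomials `Bb`
(sums of Matsumoto lifts of shuffle permutations) are encoded through their defining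
recursion `B(r+1,s) = B(r,s)^{[1]} + B(r+1,s-1)^{[1]} · T_{r+1,1}`. -/

variable {A : Type*} [Ring A]

/-- Shift of the generator family by `k`: `(shiftFam ψ k) i = ψ (i + k)`. -/
def shiftFam (ψ : ℕ → A) (k : ℕ) : ℕ → A := fun i => ψ (i + k)

/-- The descending product `ψ (j+n-1) ⋯ ψ (j+1) ψ j`. -/
def fall (ψ : ℕ → A) : ℕ → ℕ → A
  | _, 0 => 1
  | j, n + 1 => fall ψ (j + 1) n * ψ j

/-- `T_{m,n} = (ψ_n ⋯ ψ_1)(ψ_{n+1} ⋯ ψ_2) ⋯ (ψ_{n+m-1} ⋯ ψ_m)`, the braiding of the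
first `m` strands past the next `n` strands. -/
def Tb (ψ : ℕ → A) : ℕ → ℕ → A
  | 0, _ => 1
  | m + 1, n => Tb ψ m n * fall ψ (m + 1) n

/-- The braided binomial `B(r,s)`: the sum of the Matsumoto lifts of all `(r,s)`-shuffle
permutations. -/
def Bb (ψ : ℕ → A) : ℕ → ℕ → A
  | 0, _ => 1
  | _ + 1, 0 => 1
  | r + 1, s + 1 =>
      Bb (shiftFam ψ 1) r (s + 1) + Bb (shiftFam ψ 1) (r + 1) s * Tb ψ (r + 1) 1
  termination_by r s => (r, s)

lemma fall_zero' (ψ : ℕ → A) (j : ℕ) : fall ψ j 0 = 1 := rfl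
lemma fall_succ' (ψ : ℕ → A) (j n : ℕ) : fall ψ j (n+1) = fall ψ (j+1) n * ψ j := rfl
lemma fall_one' (ψ : ℕ → A) (j : ℕ) : fall ψ j 1 = ψ j := by
  rw [fall_succ', fall_zero', one_mul]

lemma fall_top (ψ : ℕ → A) : ∀ (n j : ℕ), fall ψ j (n+1) = ψ (j+n) * fall ψ j n
  | 0, j => by rw [fall_one', fall_zero', mul_one]; rfl
  | n+1, j => by
    calc fall ψ j (n+1+1) = (ψ (j+1+n) * fall ψ (j+1) n) * ψ j := by
          rw [fall_succ' ψ j (n+1), fall_top ψ n (j+1)]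
    _ = ψ (j+(n+1)) * fall ψ j (n+1) := by
          rw [show j+1+n = j+(n+1) from by omega, mul_assoc, ← fall_succ']

lemma fall_concat (ψ : ℕ → A) : ∀ (a b j : ℕ), fall ψ (j+a) b * fall ψ j a = fall ψ j (a+b)
  | 0, b, j => by rw [fall_zero', mul_one, show 0+b = b from by omega]; rfl
  | a+1, b, j => by
    rw [fall_succ' ψ j a, ← mul_assoc, show j+(a+1) = (j+1)+a from by omega,
      fall_concat ψ a b (j+1), show a+1+b = (a+b)+1 from by omega, fall_succ']

lemma fall_shift (ψ : ℕ → A) (k : ℕ) : ∀ (n j : ℕ), fall (shiftFam ψ k) j n = fall ψ (j+k) n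
  | 0, j => rfl
  | n+1, j => by
    rw [fall_succ', fall_succ', fall_shift ψ k n (j+1), show j+1+k = j+k+1 from by omega]
    rfl

lemma psi_comm_fall {ψ : ℕ → A} (hcomm : ∀ i j, i + 2 ≤ j → ψ i * ψ j = ψ j * ψ i) :
    ∀ (n j i : ℕ), i + 2 ≤ j → ψ i * fall ψ j n = fall ψ j n * ψ i
  | 0, j, i, h => by rw [fall_zero', one_mul, mul_one]
  | n+1, j, i, h => by
    rw [fall_succ', ← mul_assoc, psi_comm_fall hcomm (n) (j+1) i (by omega), mul_assoc,
      hcomm i j h, ← mul_assoc]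

lemma fall_comm_psi {ψ : ℕ → A} (hcomm : ∀ i j, i + 2 ≤ j → ψ i * ψ j = ψ j * ψ i) :
    ∀ (n j i : ℕ), j + n + 1 ≤ i → fall ψ j n * ψ i = ψ i * fall ψ j n
  | 0, j, i, h => by rw [fall_zero', one_mul, mul_one]
  | n+1, j, i, h => by
    rw [fall_succ', mul_assoc, hcomm j i (by omega), ← mul_assoc,
      fall_comm_psi hcomm n (j+1) i (by omega), mul_assoc]

lemma fall_mul_psi {ψ : ℕ → A}
    (hbraid : ∀ i, ψ i * ψ (i + 1) * ψ i = ψ (i + 1) * ψ i * ψ (i + 1))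
    (hcomm : ∀ i j, i + 2 ≤ j → ψ i * ψ j = ψ j * ψ i) :
    ∀ (m k j : ℕ), k + 2 ≤ m → fall ψ j m * ψ (j+k+1) = ψ (j+k) * fall ψ j m := by
  intro m
  induction m with
  | zero => intro k j h; omega
  | succ m ih =>
    intro k j h
    rcases Nat.lt_or_ge (k+2) (m+1) with hlt | hge
    · rw [fall_top ψ m j, mul_assoc, ih k j (by omega), ← mul_assoc,
        ← hcomm (j+k) (j+m) (by omega), mul_assoc]
    · have hm : m = k + 1 := by omega
      subst hm
      show fall ψ j (k+1+1) * ψ (j+k+1) = ψ (j+k) * fall ψ j (k+1+1)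
      rw [fall_top ψ (k+1) j, fall_top ψ k j]
      simp only [show j+(k+1) = j+k+1 from rfl]
      have hc' : fall ψ j k * ψ (j+k+1) = ψ (j+k+1) * fall ψ j k :=
        fall_comm_psi hcomm k j (j+k+1) (by omega)
      calc (ψ (j+k+1) * (ψ (j+k) * fall ψ j k)) * ψ (j+k+1)
          = ψ (j+k+1) * ψ (j+k) * (fall ψ j k * ψ (j+k+1)) := by noncomm_ring
        _ = ψ (j+k+1) * ψ (j+k) * (ψ (j+k+1) * fall ψ j k) := by rw [hc']
        _ = (ψ (j+k+1) * ψ (j+k) * ψ (j+k+1)) * fall ψ j k := by noncomm_ring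
        _ = (ψ (j+k) * ψ (j+k+1) * ψ (j+k)) * fall ψ j k := by rw [← hbraid (j+k)]
        _ = ψ (j+k) * (ψ (j+k+1) * (ψ (j+k) * fall ψ j k)) := by noncomm_ring

lemma Tb_zero' (ψ : ℕ → A) (n : ℕ) : Tb ψ 0 n = 1 := rfl
lemma Tb_one (ψ : ℕ → A) (m : ℕ) : Tb ψ (m+1) 1 = Tb ψ m 1 * ψ (m+1) := by
  show Tb ψ m 1 * fall ψ (m+1) 1 = _
  rw [fall_one']

lemma fall_comm_Tb1 {ψ : ℕ → A} (hcomm : ∀ i j, i + 2 ≤ j → ψ i * ψ j = ψ j * ψ i) :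
    ∀ (m j n : ℕ), m + 2 ≤ j → fall ψ j n * Tb ψ m 1 = Tb ψ m 1 * fall ψ j n
  | 0, j, n, h => by rw [Tb_zero', one_mul, mul_one]
  | m+1, j, n, h => by
    rw [Tb_one, ← mul_assoc, fall_comm_Tb1 hcomm m j n (by omega), mul_assoc,
      ← psi_comm_fall hcomm n j (m+1) (by omega), ← mul_assoc]

lemma Tb1_intertwine (X : A) (φ χ : ℕ → A) :
    ∀ (m : ℕ), (∀ i, 1 ≤ i → i ≤ m → X * φ i = χ i * X) → X * Tb φ m 1 = Tb χ m 1 * X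
  | 0, h => by rw [Tb_zero', Tb_zero', one_mul, mul_one]
  | m+1, h => by
    rw [Tb_one, Tb_one, ← mul_assoc,
      Tb1_intertwine X φ χ m (fun i hi him => h i hi (by omega)), mul_assoc,
      h (m+1) (by omega) (le_refl _), ← mul_assoc]

lemma Bb_zero (ψ : ℕ → A) (s : ℕ) : Bb ψ 0 s = 1 := by rw [Bb]
lemma Bb_right_zero (ψ : ℕ → A) (n : ℕ) : Bb ψ n 0 = 1 := by cases n <;> rw [Bb]
lemma Bb_succ_succ (ψ : ℕ → A) (r s : ℕ) :
    Bb ψ (r+1) (s+1) = Bb (shiftFam ψ 1) r (s+1) + Bb (shiftFam ψ 1) (r+1) s * Tb ψ (r+1) 1 := by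
  rw [Bb]

lemma shift_hcomm {ψ : ℕ → A} (hcomm : ∀ i j, i + 2 ≤ j → ψ i * ψ j = ψ j * ψ i) (k : ℕ) :
    ∀ i j, i + 2 ≤ j → shiftFam ψ k i * shiftFam ψ k j = shiftFam ψ k j * shiftFam ψ k i :=
  fun i j h => hcomm (i+k) (j+k) (by omega)

lemma Bb_intertwine (X : A) : ∀ (n a b : ℕ) (φ χ : ℕ → A), a + b ≤ n →
    (∀ i, 1 ≤ i → i + 1 ≤ a + b → X * φ i = χ i * X) →
    X * Bb φ a b = Bb χ a b * X := by
  intro n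
  induction n with
  | zero =>
    intro a b φ χ hn h
    have ha : a = 0 := by omega
    subst ha
    rw [Bb_zero, Bb_zero, one_mul, mul_one]
  | succ n ih =>
    intro a b φ χ hn h
    match a, b with
    | 0, b => rw [Bb_zero, Bb_zero, one_mul, mul_one]
    | a+1, 0 => rw [Bb_right_zero, Bb_right_zero, one_mul, mul_one]
    | a+1, b+1 =>
      have h1 : X * Bb (shiftFam φ 1) a (b+1) = Bb (shiftFam χ 1) a (b+1) * X :=
        ih a (b+1) (shiftFam φ 1) (shiftFam χ 1) (by omega)
          (fun i hi hib => h (i+1) (by omega) (by omega))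
      have h2 : X * Bb (shiftFam φ 1) (a+1) b = Bb (shiftFam χ 1) (a+1) b * X :=
        ih (a+1) b (shiftFam φ 1) (shiftFam χ 1) (by omega)
          (fun i hi hib => h (i+1) (by omega) (by omega))
      have h3 : X * Tb φ (a+1) 1 = Tb χ (a+1) 1 * X :=
        Tb1_intertwine X φ χ (a+1) (fun i hi him => h i hi (by omega))
      rw [Bb_succ_succ, Bb_succ_succ, mul_add, add_mul, h1, ← mul_assoc, h2, mul_assoc, h3,
        ← mul_assoc]

lemma Bb_R2 : ∀ (n r s : ℕ) (ψ : ℕ → A), r + s ≤ n →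
    (∀ i j, i + 2 ≤ j → ψ i * ψ j = ψ j * ψ i) →
    Bb ψ (r+1) (s+1) = Bb ψ (r+1) s + Bb ψ r (s+1) * fall ψ (r+1) (s+1) := by
  intro n
  induction n with
  | zero =>
    intro r s ψ hn hc
    obtain ⟨rfl, rfl⟩ : r = 0 ∧ s = 0 := by omega
    rw [Bb_succ_succ, Bb_zero, Bb_right_zero, Bb_right_zero, Bb_zero, fall_one', Tb_one,
      Tb_zero', one_mul, one_mul]
  | succ n ih =>
    intro r s ψ hn hc
    have hcφ := shift_hcomm hc 1
    match r, s with
    | 0, 0 =>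
      rw [Bb_succ_succ, Bb_zero, Bb_right_zero, Bb_right_zero, Bb_zero, fall_one', Tb_one,
        Tb_zero', one_mul, one_mul]
    | 0, s+1 =>
      have hL : Bb ψ 1 (s+2) = 1 + Bb (shiftFam ψ 1) 1 (s+1) * ψ 1 := by
        rw [Bb_succ_succ ψ 0 (s+1), Bb_zero, Tb_one, Tb_zero', one_mul]
      have hR : Bb ψ 1 (s+1) = 1 + Bb (shiftFam ψ 1) 1 s * ψ 1 := by
        rw [Bb_succ_succ ψ 0 s, Bb_zero, Tb_one, Tb_zero', one_mul]
      have ihs : Bb (shiftFam ψ 1) 1 (s+1)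
          = Bb (shiftFam ψ 1) 1 s + fall ψ 2 (s+1) := by
        rw [ih 0 s (shiftFam ψ 1) (by omega) hcφ, Bb_zero, one_mul, fall_shift]
      have ffs : fall ψ 1 (s+2) = fall ψ 2 (s+1) * ψ 1 := fall_succ' ψ 1 (s+1)
      rw [hL, ihs, hR, Bb_zero, one_mul, ffs]
      noncomm_ring
    | r+1, 0 =>
      have hL : Bb ψ (r+2) 1 = Bb (shiftFam ψ 1) (r+1) 1 + Tb ψ (r+2) 1 := by
        rw [Bb_succ_succ ψ (r+1) 0, Bb_right_zero, one_mul]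
      have ihs : Bb (shiftFam ψ 1) (r+1) 1 = 1 + Bb (shiftFam ψ 1) r 1 * ψ (r+2) := by
        rw [ih r 0 (shiftFam ψ 1) (by omega) hcφ, Bb_right_zero, fall_shift, fall_one']
      have hR : Bb ψ (r+1) 1 = Bb (shiftFam ψ 1) r 1 + Tb ψ (r+1) 1 := by
        rw [Bb_succ_succ ψ r 0, Bb_right_zero, one_mul]
      rw [hL, ihs, hR, Bb_right_zero, Tb_one ψ (r+1), fall_one']
      noncomm_ring
    | r+1, s+1 =>
      have hL : Bb ψ (r+2) (s+2) = Bb (shiftFam ψ 1) (r+1) (s+2)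
          + Bb (shiftFam ψ 1) (r+2) (s+1) * Tb ψ (r+2) 1 := Bb_succ_succ ψ (r+1) (s+1)
      have ih1 : Bb (shiftFam ψ 1) (r+1) (s+2) = Bb (shiftFam ψ 1) (r+1) (s+1)
          + Bb (shiftFam ψ 1) r (s+2) * fall ψ (r+2) (s+2) := by
        rw [ih r (s+1) (shiftFam ψ 1) (by omega) hcφ, fall_shift]
      have ih2 : Bb (shiftFam ψ 1) (r+2) (s+1) = Bb (shiftFam ψ 1) (r+2) s
          + Bb (shiftFam ψ 1) (r+1) (s+1) * fall ψ (r+3) (s+1) := by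
        rw [ih (r+1) s (shiftFam ψ 1) (by omega) hcφ, fall_shift]
      have hR1 : Bb ψ (r+2) (s+1) = Bb (shiftFam ψ 1) (r+1) (s+1)
          + Bb (shiftFam ψ 1) (r+2) s * Tb ψ (r+2) 1 := Bb_succ_succ ψ (r+1) s
      have hR2 : Bb ψ (r+1) (s+2) = Bb (shiftFam ψ 1) r (s+2)
          + Bb (shiftFam ψ 1) (r+1) (s+1) * Tb ψ (r+1) 1 := Bb_succ_succ ψ r (s+1)
      have key : fall ψ (r+3) (s+1) * Tb ψ (r+2) 1 = Tb ψ (r+1) 1 * fall ψ (r+2) (s+2) := by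
        rw [Tb_one ψ (r+1), ← mul_assoc, fall_comm_Tb1 hc (r+1) (r+3) (s+1) (by omega),
          mul_assoc]
        conv_rhs => rw [fall_succ' ψ (r+2) (s+1)]
      have expand : (Bb (shiftFam ψ 1) (r+2) s
            + Bb (shiftFam ψ 1) (r+1) (s+1) * fall ψ (r+3) (s+1)) * Tb ψ (r+2) 1
          = Bb (shiftFam ψ 1) (r+2) s * Tb ψ (r+2) 1
            + Bb (shiftFam ψ 1) (r+1) (s+1) * (fall ψ (r+3) (s+1) * Tb ψ (r+2) 1) := by
        noncomm_ring
      rw [hL, ih1, ih2, hR1, hR2, expand, key]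
      noncomm_ring

lemma assoc_aux (ψ : ℕ → A)
    (hbraid : ∀ i, ψ i * ψ (i + 1) * ψ i = ψ (i + 1) * ψ i * ψ (i + 1))
    (hcomm : ∀ i j, i + 2 ≤ j → ψ i * ψ j = ψ j * ψ i) :
    ∀ (n r s t : ℕ), r + s + t ≤ n →
      Bb ψ (r + s) t * Bb ψ r s = Bb ψ r (s + t) * Bb (shiftFam ψ r) s t := by
  intro n
  induction n with
  | zero =>
    intro r s t hn
    obtain ⟨rfl, rfl, rfl⟩ : r = 0 ∧ s = 0 ∧ t = 0 := by omega
    simp [Bb_zero, Bb_right_zero]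
  | succ n ih =>
    intro r s t hn
    rcases t with _ | c
    · rw [Bb_right_zero, Bb_right_zero, one_mul, mul_one, Nat.add_zero]
    rcases s with _ | b
    · rw [Bb_right_zero, Bb_zero, mul_one, mul_one, show 0+(c+1) = c+1 from by omega, Nat.add_zero]
    rcases r with _ | a
    · have hs : shiftFam ψ 0 = ψ := funext fun i => rfl
      rw [hs, Bb_zero, Bb_zero, mul_one, one_mul, show 0+(b+1) = b+1 from by omega]
    -- main case
    rw [show a+1+(b+1) = a+b+2 from by omega, show b+1+(c+1) = b+c+2 from by omega]
    have hE1 : Bb ψ (a+b+2) (c+1)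
        = Bb ψ (a+b+2) c + Bb ψ (a+b+1) (c+1) * fall ψ (a+b+2) (c+1) :=
      Bb_R2 (a+b+1+c) (a+b+1) c ψ (le_refl _) hcomm
    have hE2 : Bb ψ (a+1) (b+1)
        = Bb ψ (a+1) b + Bb ψ a (b+1) * fall ψ (a+1) (b+1) :=
      Bb_R2 (a+b) a b ψ (le_refl _) hcomm
    have hE3 : Bb ψ (a+1) (b+c+2)
        = Bb ψ (a+1) (b+c+1) + Bb ψ a (b+c+2) * fall ψ (a+1) (b+c+2) :=
      Bb_R2 (a+(b+c+1)) a (b+c+1) ψ (le_refl _) hcomm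
    have hE4 : Bb (shiftFam ψ (a+1)) (b+1) (c+1)
        = Bb (shiftFam ψ (a+1)) (b+1) c
          + Bb (shiftFam ψ (a+1)) b (c+1) * fall ψ (a+b+2) (c+1) := by
      rw [Bb_R2 (b+c) b c (shiftFam ψ (a+1)) (le_refl _) (shift_hcomm hcomm (a+1)),
        fall_shift, show b+1+(a+1) = a+b+2 from by omega]
    have hC1 : fall ψ (a+b+2) (c+1) * Bb ψ (a+1) b
        = Bb ψ (a+1) b * fall ψ (a+b+2) (c+1) :=
      Bb_intertwine _ (a+1+b) (a+1) b ψ ψ (le_refl _)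
        (fun i hi hib => (psi_comm_fall hcomm (c+1) (a+b+2) i (by omega)).symm)
    have hC2 : fall ψ (a+b+2) (c+1) * Bb ψ a (b+1)
        = Bb ψ a (b+1) * fall ψ (a+b+2) (c+1) :=
      Bb_intertwine _ (a+(b+1)) a (b+1) ψ ψ (le_refl _)
        (fun i hi hib => (psi_comm_fall hcomm (c+1) (a+b+2) i (by omega)).symm)
    have hC3 : fall ψ (a+b+2) (c+1) * fall ψ (a+1) (b+1) = fall ψ (a+1) (b+c+2) := by
      have h := fall_concat ψ (b+1) (c+1) (a+1)
      rw [show a+1+(b+1) = a+b+2 from by omega, show b+1+(c+1) = b+c+2 from by omega] at h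
      exact h
    have hC4 : fall ψ (a+1) (b+c+2) * Bb (shiftFam ψ (a+1)) (b+1) (c+1)
        = Bb (shiftFam ψ a) (b+1) (c+1) * fall ψ (a+1) (b+c+2) :=
      Bb_intertwine _ (b+1+(c+1)) (b+1) (c+1) (shiftFam ψ (a+1)) (shiftFam ψ a) (le_refl _)
        (fun i hi hib => by
          have h := fall_mul_psi hbraid hcomm (b+c+2) (i-1) (a+1) (by omega)
          rw [show a+1+(i-1)+1 = i+(a+1) from by omega,
            show a+1+(i-1) = i+a from by omega] at h
          exact h)
    have hIH1 : Bb ψ (a+b+2) c * Bb ψ (a+1) (b+1)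
        = Bb ψ (a+1) (b+c+1) * Bb (shiftFam ψ (a+1)) (b+1) c := by
      have h := ih (a+1) (b+1) c (by omega)
      rw [show a+1+(b+1) = a+b+2 from by omega, show b+1+c = b+c+1 from by omega] at h
      exact h
    have hIH2 : Bb ψ (a+b+1) (c+1) * Bb ψ (a+1) b
        = Bb ψ (a+1) (b+c+1) * Bb (shiftFam ψ (a+1)) b (c+1) := by
      have h := ih (a+1) b (c+1) (by omega)
      rw [show a+1+b = a+b+1 from by omega] at h
      exact h
    have hIH3 : Bb ψ (a+b+1) (c+1) * Bb ψ a (b+1)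
        = Bb ψ a (b+c+2) * Bb (shiftFam ψ a) (b+1) (c+1) := by
      have h := ih a (b+1) (c+1) (by omega)
      rw [show a+(b+1) = a+b+1 from by omega, show b+1+(c+1) = b+c+2 from by omega] at h
      exact h
    calc Bb ψ (a+b+2) (c+1) * Bb ψ (a+1) (b+1)
        = (Bb ψ (a+b+2) c + Bb ψ (a+b+1) (c+1) * fall ψ (a+b+2) (c+1))
            * (Bb ψ (a+1) b + Bb ψ a (b+1) * fall ψ (a+1) (b+1)) := by rw [hE1, hE2]
      _ = Bb ψ (a+b+2) c * (Bb ψ (a+1) b + Bb ψ a (b+1) * fall ψ (a+1) (b+1))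
          + Bb ψ (a+b+1) (c+1) * (fall ψ (a+b+2) (c+1) * Bb ψ (a+1) b)
          + Bb ψ (a+b+1) (c+1)
              * ((fall ψ (a+b+2) (c+1) * Bb ψ a (b+1)) * fall ψ (a+1) (b+1)) := by
          noncomm_ring
      _ = Bb ψ (a+b+2) c * Bb ψ (a+1) (b+1)
          + Bb ψ (a+b+1) (c+1) * (Bb ψ (a+1) b * fall ψ (a+b+2) (c+1))
          + Bb ψ (a+b+1) (c+1)
              * ((Bb ψ a (b+1) * fall ψ (a+b+2) (c+1)) * fall ψ (a+1) (b+1)) := by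
          rw [← hE2, hC1, hC2]
      _ = Bb ψ (a+b+2) c * Bb ψ (a+1) (b+1)
          + (Bb ψ (a+b+1) (c+1) * Bb ψ (a+1) b) * fall ψ (a+b+2) (c+1)
          + (Bb ψ (a+b+1) (c+1) * Bb ψ a (b+1))
              * (fall ψ (a+b+2) (c+1) * fall ψ (a+1) (b+1)) := by
          noncomm_ring
      _ = Bb ψ (a+1) (b+c+1) * Bb (shiftFam ψ (a+1)) (b+1) c
          + (Bb ψ (a+1) (b+c+1) * Bb (shiftFam ψ (a+1)) b (c+1)) * fall ψ (a+b+2) (c+1)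
          + (Bb ψ a (b+c+2) * Bb (shiftFam ψ a) (b+1) (c+1)) * fall ψ (a+1) (b+c+2) := by
          rw [hIH1, hIH2, hIH3, hC3]
      _ = Bb ψ (a+1) (b+c+1)
            * (Bb (shiftFam ψ (a+1)) (b+1) c
              + Bb (shiftFam ψ (a+1)) b (c+1) * fall ψ (a+b+2) (c+1))
          + Bb ψ a (b+c+2)
              * (Bb (shiftFam ψ a) (b+1) (c+1) * fall ψ (a+1) (b+c+2)) := by
          noncomm_ring
      _ = Bb ψ (a+1) (b+c+1) * Bb (shiftFam ψ (a+1)) (b+1) (c+1)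
          + Bb ψ a (b+c+2)
              * (fall ψ (a+1) (b+c+2) * Bb (shiftFam ψ (a+1)) (b+1) (c+1)) := by
          rw [← hE4, ← hC4]
      _ = (Bb ψ (a+1) (b+c+1) + Bb ψ a (b+c+2) * fall ψ (a+1) (b+c+2))
            * Bb (shiftFam ψ (a+1)) (b+1) (c+1) := by noncomm_ring
      _ = Bb ψ (a+1) (b+c+2) * Bb (shiftFam ψ (a+1)) (b+1) (c+1) := by rw [← hE3]

/-- associativity of the shuffle product `x * y = B(r,s)(x ⊗ y)`:
`B(r+s, t) ∘ (B(r,s) ⊗ id^{⊗t}) = B(r, s+t) ∘ (id^{⊗r} ⊗ B(s,t))` in the braid group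
algebra (`B(r,s) ⊗ id` is just `B(r,s)` acting on the first `r+s` strands, and
`id ⊗ B(s,t)` is `B(s,t)` shifted by `r`). -/
theorem shuffle_product_associative (ψ : ℕ → A)
    (hbraid : ∀ i, ψ i * ψ (i + 1) * ψ i = ψ (i + 1) * ψ i * ψ (i + 1))
    (hcomm : ∀ i j, i + 2 ≤ j → ψ i * ψ j = ψ j * ψ i)
    (r s t : ℕ) :
    Bb ψ (r + s) t * Bb ψ r s = Bb ψ r (s + t) * Bb (shiftFam ψ r) s t :=
  assoc_aux ψ hbraid hcomm (r + s + t) r s t (le_refl _)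
end

section
/- For q = exp(iπ/p), the fusion product formula V^j_{r,0} ⊙ V^m_{s,0} = ∑_{i=0}^{s} q^{-ij} [r+i choose r]_{q²} V^{{j,m}}_{r+i, s-i, 0} defines a map intertwining the deconcatenation coactions: applying the coaction (deconcatenation up to the first vertex) after ⊙ agrees with applying the tensor-product coaction before ⊙. -/
open TensorProduct

/-- `q = exp(iπ/p)`. -/
noncomputable def qRoot (p : ℕ) : ℂ := Complex.exp (Real.pi * Complex.I / p)

/-- The Gaussian binomial coefficient `[n choose k]_t` via the q-Pascal recursion. -/
def qChoose {R : Type*} [CommRing R] (q : R) : ℕ → ℕ → R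
  | _, 0 => 1
  | 0, _ + 1 => 0
  | n + 1, k + 1 => qChoose q n k + q ^ (k + 1) * qChoose q n (k + 1)

/- Models: the Yetter–Drinfeld module `V^j` has basis `V^j_{r,0}`, `r ∈ ℕ` (`ℕ →₀ ℂ`);
the Nichols/shuffle algebra `H` has basis `F(a)`, `a ∈ ℕ` (`ℕ →₀ ℂ`); the two-vertex
module has basis `V^{{j,m}}_{t₁,t₂,0}`, `(t₁,t₂) ∈ ℕ × ℕ` (`(ℕ × ℕ) →₀ ℂ`). -/

/-- The fusion product
`V^j_{r,0} ⊙ V^m_{s,0} = ∑_{i=0}^{s} q^{-ij} [r+i choose r]_{q²} V^{{j,m}}_{r+i,s-i,0}`,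
as a linear map from `V^j ⊗ V^m` to the two-vertex module. -/
noncomputable def fus (p : ℕ) (j : ℤ) :
    TensorProduct ℂ (ℕ →₀ ℂ) (ℕ →₀ ℂ) →ₗ[ℂ] ((ℕ × ℕ) →₀ ℂ) :=
  TensorProduct.lift
    (Finsupp.lsum ℂ fun r =>
      LinearMap.toSpanSingleton ℂ _
        (Finsupp.lsum ℂ fun s =>
          LinearMap.toSpanSingleton ℂ _
            (∑ i ∈ Finset.range (s + 1),
              ((qRoot p) ^ (-((i : ℤ) * j)) * qChoose ((qRoot p) ^ 2) (r + i) r) •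
                Finsupp.single (r + i, s - i) (1 : ℂ))))

/-- The coaction on the two-vertex module: deconcatenation up to the first vertex,
`δ(V^{{j,m}}_{t₁,t₂,0}) = ∑_{a=0}^{t₁} F(a) ⊗ V^{{j,m}}_{t₁-a,t₂,0}`. -/
noncomputable def deltaW :
    ((ℕ × ℕ) →₀ ℂ) →ₗ[ℂ] TensorProduct ℂ (ℕ →₀ ℂ) ((ℕ × ℕ) →₀ ℂ) :=
  Finsupp.lsum ℂ fun st =>
    LinearMap.toSpanSingleton ℂ _
      (∑ a ∈ Finset.range (st.1 + 1),
        Finsupp.single a (1 : ℂ) ⊗ₜ[ℂ] Finsupp.single (st.1 - a, st.2) (1 : ℂ))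

/-!
Both sides are expanded in the basis `F(c) ⊗ V^{{j,m}}_{t₁,t₂,0}`. On the right, the term
`F(a+b) ⊗ V^j_{r-a,0} ⊗ V^m_{s-b,0}` fuses, through the `k`-th summand of `⊙`, to a multiple of
`F(c) ⊗ V^{{j,m}}_{r+i-c,s-i,0}` with `c = a + b` and `i = b + k`. The powers of `q` combine to
`q^{-ij} (q²)^{b(r-a)}`, so collecting the terms with fixed `(i, c)` leaves the `q`-Vandermonde
expansion of `[r+i choose r]_{q²}` along `r + i = c + (r + i - c)`, which is the coefficient of the
left-hand side.
-/

open Finset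

section QChoose

variable {R : Type*} [CommRing R] (q : R)

@[simp] lemma qChoose_zero_right (n : ℕ) : qChoose q n 0 = 1 := by cases n <;> rfl

lemma qChoose_succ_succ (n k : ℕ) :
    qChoose q (n + 1) (k + 1) = qChoose q n k + q ^ (k + 1) * qChoose q n (k + 1) := rfl

lemma qChoose_eq_zero_of_lt {n k : ℕ} (h : n < k) : qChoose q n k = 0 := by
  induction n generalizing k with
  | zero => obtain ⟨k, rfl⟩ := Nat.exists_eq_add_one.mpr h; rfl
  | succ n ih =>
    obtain ⟨k, rfl⟩ := Nat.exists_eq_add_one.mpr (Nat.zero_lt_of_lt h)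
    rw [qChoose_succ_succ, ih (by omega), ih (by omega), mul_zero, add_zero]

/-- The `q`-Vandermonde identity. -/
theorem qChoose_add (m n k : ℕ) :
    qChoose q (m + n) k =
      ∑ x ∈ antidiagonal k, q ^ ((m - x.1) * x.2) * qChoose q m x.1 * qChoose q n x.2 := by
  induction m generalizing k with
  | zero =>
    rw [Nat.sum_antidiagonal_eq_sum_range_succ_mk, sum_range_succ']
    simp [qChoose_eq_zero_of_lt]
  | succ m ih =>
    cases k with
    | zero => simp
    | succ k =>
      rw [Nat.add_right_comm, qChoose_succ_succ, ih, ih, Nat.sum_antidiagonal_succ,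
        Nat.sum_antidiagonal_succ, mul_add, mul_sum, add_left_comm, ← sum_add_distrib]
      congr 1
      · simp only [Nat.sub_zero, qChoose_zero_right]; ring
      refine sum_congr rfl fun x hx => ?_
      rw [HasAntidiagonal.mem_antidiagonal] at hx
      rw [qChoose_succ_succ, Nat.add_sub_add_right]
      rcases lt_or_ge m (x.1 + 1) with hm | hm
      · simp [qChoose_eq_zero_of_lt q hm]
      · have hexp : (m - x.1) * x.2 + (x.1 + 1) = k + 1 + (m - (x.1 + 1)) * x.2 := by
          obtain ⟨d, rfl⟩ := Nat.exists_eq_add_of_le hm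
          simp only [Nat.add_sub_cancel_left, show x.1 + 1 + d - x.1 = d + 1 by omega]
          rw [← hx]; ring
        linear_combination (qChoose q m (x.1 + 1) * qChoose q n x.2) * congrArg (q ^ ·) hexp.symm

lemma qChoose_eq_sum_range {c n : ℕ} (hc : c ≤ n) (k : ℕ) :
    qChoose q n k =
      ∑ a ∈ range (k + 1), q ^ ((c - a) * (k - a)) * qChoose q c a * qChoose q (n - c) (k - a) := by
  rw [← Nat.sum_antidiagonal_eq_sum_range_succ_mk (f := fun x =>
    q ^ ((c - x.1) * x.2) * qChoose q c x.1 * qChoose q (n - c) x.2), ← qChoose_add,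
    Nat.add_sub_cancel' hc]

end QChoose

lemma sum_range_diag_flip' {M : Type*} [AddCommMonoid M] (s : ℕ) (f : ℕ → ℕ → M) :
    ∑ b ∈ range (s + 1), ∑ k ∈ range (s - b + 1), f b k =
      ∑ i ∈ range (s + 1), ∑ b ∈ range (i + 1), f b (i - b) := by
  rw [sum_range_diag_flip]
  refine sum_congr rfl fun b hb => ?_
  rw [Nat.sub_add_comm (mem_range_succ_iff.mp hb)]

lemma sum_range_sum_range_add {M : Type*} [AddCommMonoid M] (r i : ℕ) (H : ℕ → ℕ → M)
    (hH : ∀ a ≤ r, ∀ c ≤ r + i, c < a ∨ a + i < c → H a c = 0) :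
    ∑ a ∈ range (r + 1), ∑ b ∈ range (i + 1), H a (a + b) =
      ∑ c ∈ range (r + i + 1), ∑ a ∈ range (r + 1), H a c := by
  conv_rhs => rw [sum_comm]
  refine sum_congr rfl fun a ha => ?_
  rw [mem_range] at ha
  rw [← Nat.add_sub_cancel_left (n := a) (m := i + 1), ← sum_Ico_eq_sum_range]
  refine sum_subset (fun c hc => ?_) fun c hc hc' => hH a (by omega) c ?_ ?_ <;>
    simp only [mem_Ico, mem_range] at * <;> omega

lemma fus_single (p : ℕ) (j : ℤ) (r s : ℕ) :
    fus p j (Finsupp.single r (1 : ℂ) ⊗ₜ[ℂ] Finsupp.single s (1 : ℂ)) =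
      ∑ i ∈ range (s + 1),
        ((qRoot p) ^ (-((i : ℤ) * j)) * qChoose ((qRoot p) ^ 2) (r + i) r) •
          Finsupp.single (r + i, s - i) (1 : ℂ) := by
  simp [fus]

lemma deltaW_single (t₁ t₂ : ℕ) :
    deltaW (Finsupp.single (t₁, t₂) (1 : ℂ)) =
      ∑ a ∈ range (t₁ + 1), Finsupp.single a (1 : ℂ) ⊗ₜ[ℂ] Finsupp.single (t₁ - a, t₂) (1 : ℂ) := by
  simp [deltaW]

lemma coaction_coeff_mul_fus_coeff_eq {K : Type*} [Field K] {q : K} (hq : q ≠ 0) (j : ℤ)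
    {r a : ℕ} (ha : a ≤ r) (b k : ℕ) :
    q ^ ((2 * ((r : ℤ) - a) - j) * b) * qChoose (q ^ 2) (a + b) a *
        (q ^ (-((k : ℤ) * j)) * qChoose (q ^ 2) (r - a + k) (r - a)) =
      q ^ (-(((b + k : ℕ) : ℤ) * j)) * ((q ^ 2) ^ ((a + b - a) * (r - a)) *
        qChoose (q ^ 2) (a + b) a * qChoose (q ^ 2) (r + (b + k) - (a + b)) (r - a)) := by
  have hpow : q ^ ((2 * ((r : ℤ) - a) - j) * b) * q ^ (-((k : ℤ) * j)) =
      q ^ (-(((b + k : ℕ) : ℤ) * j)) * (q ^ 2) ^ ((a + b - a) * (r - a)) := by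
    rw [← pow_mul, ← zpow_natCast, ← zpow_add₀ hq, ← zpow_add₀ hq]
    push_cast [Nat.add_sub_cancel_left, Nat.cast_sub ha]
    ring_nf
  rw [show r + (b + k) - (a + b) = r - a + k by omega]
  linear_combination (qChoose (q ^ 2) (a + b) a * qChoose (q ^ 2) (r - a + k) (r - a)) * hpow

theorem fusion_intertwines_coaction_general (p : ℕ) (j : ℤ) (r s : ℕ) :
    deltaW (fus p j (Finsupp.single r (1 : ℂ) ⊗ₜ[ℂ] Finsupp.single s (1 : ℂ)))
      = TensorProduct.map (LinearMap.id : (ℕ →₀ ℂ) →ₗ[ℂ] (ℕ →₀ ℂ)) (fus p j)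
          (∑ a ∈ Finset.range (r + 1), ∑ b ∈ Finset.range (s + 1),
            ((qRoot p) ^ ((2 * ((r : ℤ) - (a : ℤ)) - j) * (b : ℤ))
                * qChoose ((qRoot p) ^ 2) (a + b) a) •
              (Finsupp.single (a + b) (1 : ℂ) ⊗ₜ[ℂ]
                (Finsupp.single (r - a) (1 : ℂ) ⊗ₜ[ℂ] Finsupp.single (s - b) (1 : ℂ)))) := by
  have hq : qRoot p ≠ 0 := Complex.exp_ne_zero _
  simp only [fus_single, deltaW_single, map_sum, map_smul, TensorProduct.map_tmul,
    LinearMap.id_coe, id_eq, TensorProduct.tmul_sum, TensorProduct.tmul_smul, smul_sum, smul_smul]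
  generalize qRoot p = q at hq ⊢
  let e (i c : ℕ) : (ℕ →₀ ℂ) ⊗[ℂ] ((ℕ × ℕ) →₀ ℂ) :=
    Finsupp.single c 1 ⊗ₜ Finsupp.single (r + i - c, s - i) 1
  -- the `a`-th term of the `q`-Vandermonde expansion of the coefficient of `e i c`
  let H (i a c : ℕ) : (ℕ →₀ ℂ) ⊗[ℂ] ((ℕ × ℕ) →₀ ℂ) :=
    (q ^ (-((i : ℤ) * j)) * ((q ^ 2) ^ ((c - a) * (r - a)) * qChoose (q ^ 2) c a *
      qChoose (q ^ 2) (r + i - c) (r - a))) • e i c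
  have hH (i : ℕ) : ∀ a ≤ r, ∀ c ≤ r + i, c < a ∨ a + i < c → H i a c = 0 := by
    rintro a ha c hc (hca | hac)
    · simp [H, qChoose_eq_zero_of_lt _ hca]
    · simp [H, qChoose_eq_zero_of_lt (q ^ 2) (show r + i - c < r - a by omega)]
  symm
  calc _ = ∑ i ∈ range (s + 1), ∑ a ∈ range (r + 1), ∑ b ∈ range (i + 1), H i a (a + b) := by
        conv_rhs => rw [sum_comm]
        refine sum_congr rfl fun a ha => ?_
        rw [sum_range_diag_flip']
        refine sum_congr rfl fun i _ => sum_congr rfl fun b hb => ?_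
        have ha : a ≤ r := mem_range_succ_iff.mp ha
        have hbi : b + (i - b) = i := Nat.add_sub_cancel' (mem_range_succ_iff.mp hb)
        simp only [H, e, coaction_coeff_mul_fus_coeff_eq hq j ha, hbi]
        rw [show r + i - (a + b) = r - a + (i - b) by omega, Nat.sub_sub, hbi]
    _ = ∑ i ∈ range (s + 1), ∑ c ∈ range (r + i + 1), ∑ a ∈ range (r + 1), H i a c :=
        sum_congr rfl fun i _ => sum_range_sum_range_add r i (H i) (hH i)
    _ = ∑ i ∈ range (s + 1), ∑ c ∈ range (r + i + 1),
          (q ^ (-((i : ℤ) * j)) * qChoose (q ^ 2) (r + i) r) • e i c := by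
        refine sum_congr rfl fun i _ => sum_congr rfl fun c hc => ?_
        rw [← sum_smul, ← mul_sum, qChoose_eq_sum_range _ (mem_range_succ_iff.mp hc)]

/-- the fusion product intertwines the deconcatenation coactions: applying
the coaction (deconcatenation up to the first vertex) after `⊙` agrees with first
applying the codiagonal coaction on `V^j ⊗ V^m` — namely
`V^j_{r,0} ⊗ V^m_{s,0} ↦ ∑_{a,b} q^{(2(r-a)-j)b} [a+b choose a]_{q²}
F(a+b) ⊗ (V^j_{r-a,0} ⊗ V^m_{s-b,0})`, using `Δ(F(a)) = ∑ F(b) ⊗ F(a-b)`, the product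
`F(a)F(b) = [a+b choose a]_{q²}F(a+b)` and the braiding of `F(b)` past the dressed vertex
`V^j_{r-a,0}` — and then `id_H ⊗ ⊙`. -/
theorem fusion_intertwines_coaction (p : ℕ) (hp : 2 ≤ p) (j m : ℤ) (r s : ℕ) :
    deltaW (fus p j (Finsupp.single r (1 : ℂ) ⊗ₜ[ℂ] Finsupp.single s (1 : ℂ)))
      = TensorProduct.map (LinearMap.id : (ℕ →₀ ℂ) →ₗ[ℂ] (ℕ →₀ ℂ)) (fus p j)
          (∑ a ∈ Finset.range (r + 1), ∑ b ∈ Finset.range (s + 1),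
            ((qRoot p) ^ ((2 * ((r : ℤ) - (a : ℤ)) - j) * (b : ℤ))
                * qChoose ((qRoot p) ^ 2) (a + b) a) •
              (Finsupp.single (a + b) (1 : ℂ) ⊗ₜ[ℂ]
                (Finsupp.single (r - a) (1 : ℂ) ⊗ₜ[ℂ] Finsupp.single (s - b) (1 : ℂ)))) :=
  fusion_intertwines_coaction_general p j r s
end
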